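/- arXiv:1312.3381 — 3 statements merged into one kernel-verified Lean document; each statement's English description precedes it below -/
import Mathlib

section
/- For a ≥ 0 and b > 1, the function V(a,b,x) = Γ(a)⁻¹ ∫₀^∞ e^{−tx} t^{a−1} (1+t)^{b−a−1} dt solves Kummer's equation x w'' + (b−x) w' − a w = 0 on (0,∞), provided a > 0. -/
open Real MeasureTheory Set Filter Topology

/-- The confluent hypergeometric function of the second kind,
`V(a,b,x) = Γ(a)⁻¹ ∫₀^∞ e^{−tx} t^{a−1} (1+t)^{b−a−1} dt`. -/
noncomputable def kummerV (a b x : ℝ) : ℝ :=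
  (Real.Gamma a)⁻¹ *
    ∫ t in Set.Ioi (0 : ℝ), Real.exp (-t * x) * t ^ (a - 1) * (1 + t) ^ (b - a - 1)

/-!
With `I_s(x) = ∫₀^∞ e^{-tx} t^{s-1} (1+t)^q dt` and `q = b - a - 1` we have `V = Γ(a)⁻¹ I_a`.
Differentiating under the integral sign gives `I_s' = -I_{s+1}`, so Kummer's equation becomes
the three-term relation `a I_a + (b - x) I_{a+1} - x I_{a+2} = 0`. Its left-hand side is the
integral over `(0, ∞)` of the derivative of `e^{-tx} t^a (1+t)^{b-a}`, which vanishes at both ends.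
-/

noncomputable def kummerIntegrand (s q x t : ℝ) : ℝ :=
  exp (-t * x) * t ^ (s - 1) * (1 + t) ^ q

noncomputable def kummerIntegral (s q x : ℝ) : ℝ :=
  ∫ t in Ioi (0 : ℝ), kummerIntegrand s q x t

lemma one_add_rpow_le_two_rpow_abs_mul {t : ℝ} (ht : 0 ≤ t) (q : ℝ) :
    (1 + t) ^ q ≤ 2 ^ |q| * (1 + t ^ |q|) := by
  have hmax : max 1 t ^ |q| ≤ 1 + t ^ |q| := by
    rcases max_choice 1 t with h | h <;> rw [h]
    · rw [one_rpow]; linarith [rpow_nonneg ht |q|]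
    · linarith
  calc (1 + t) ^ q ≤ (1 + t) ^ |q| := rpow_le_rpow_of_exponent_le (by linarith) (le_abs_self q)
    _ ≤ (2 * max 1 t) ^ |q| :=
        rpow_le_rpow (by linarith) (by linarith [le_max_left 1 t, le_max_right 1 t]) (abs_nonneg q)
    _ = 2 ^ |q| * max 1 t ^ |q| := mul_rpow zero_le_two (by positivity)
    _ ≤ 2 ^ |q| * (1 + t ^ |q|) := by gcongr

lemma integrableOn_exp_neg_mul_mul_rpow {x s : ℝ} (hx : 0 < x) (hs : 0 < s) :
    IntegrableOn (fun t : ℝ => exp (-t * x) * t ^ (s - 1)) (Ioi 0) := by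
  refine (integrableOn_rpow_mul_exp_neg_mul_rpow (s := s - 1) (p := 1) (by linarith) one_pos
    hx).congr_fun (fun t _ => ?_) measurableSet_Ioi
  dsimp only
  rw [rpow_one, mul_comm, neg_mul, neg_mul, mul_comm x]

lemma kummerIntegrand_nonneg (s q x : ℝ) {t : ℝ} (ht : 0 ≤ t) : 0 ≤ kummerIntegrand s q x t := by
  unfold kummerIntegrand
  have : 0 ≤ 1 + t := by linarith
  positivity

lemma continuousOn_kummerIntegrand (s q x : ℝ) : ContinuousOn (kummerIntegrand s q x) (Ioi 0) := by
  unfold kummerIntegrand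
  refine ContinuousOn.mul (ContinuousOn.mul (by fun_prop) ?_) ?_
  · exact continuousOn_id.rpow_const fun t ht => Or.inl (ne_of_gt ht)
  · exact (continuousOn_const.add continuousOn_id).rpow_const fun t ht =>
      Or.inl (show (1 : ℝ) + t > 0 by linarith [mem_Ioi.1 ht]).ne'

lemma integrableOn_kummerIntegrand {s x : ℝ} (q : ℝ) (hs : 0 < s) (hx : 0 < x) :
    IntegrableOn (kummerIntegrand s q x) (Ioi 0) := by
  have hdom : IntegrableOn (fun t => 2 ^ |q| *
      (exp (-t * x) * t ^ (s - 1) + exp (-t * x) * t ^ (s + |q| - 1))) (Ioi 0) :=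
    ((integrableOn_exp_neg_mul_mul_rpow hx hs).add
      (integrableOn_exp_neg_mul_mul_rpow hx (by positivity))).const_mul _
  refine hdom.mono' ((continuousOn_kummerIntegrand s q x).aestronglyMeasurable measurableSet_Ioi) ?_
  refine (ae_restrict_iff' measurableSet_Ioi).2 (Eventually.of_forall fun t (ht : 0 < t) => ?_)
  rw [Real.norm_of_nonneg (kummerIntegrand_nonneg s q x ht.le),
    show s + |q| - 1 = s - 1 + |q| by ring, rpow_add ht]
  calc kummerIntegrand s q x t ≤ exp (-t * x) * t ^ (s - 1) * (2 ^ |q| * (1 + t ^ |q|)) := by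
        unfold kummerIntegrand; gcongr; exact one_add_rpow_le_two_rpow_abs_mul ht.le q
    _ = _ := by ring

lemma hasDerivAt_kummerIntegrand_param (s q : ℝ) {t : ℝ} (ht : 0 < t) (y : ℝ) :
    HasDerivAt (fun y => kummerIntegrand s q y t) (-kummerIntegrand (s + 1) q y t) y := by
  have hexp : HasDerivAt (fun y => exp (-t * y)) (exp (-t * y) * -t) y := by
    simpa using ((hasDerivAt_id y).const_mul (-t)).exp
  refine ((hexp.mul_const (t ^ (s - 1))).mul_const ((1 + t) ^ q)).congr_deriv ?_
  rw [kummerIntegrand, add_sub_cancel_right, ← sub_add_cancel s 1, rpow_add_one ht.ne',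
    add_sub_cancel_right]
  ring

lemma hasDerivAt_kummerIntegral {s x : ℝ} (q : ℝ) (hs : 0 < s) (hx : 0 < x) :
    HasDerivAt (kummerIntegral s q) (-kummerIntegral (s + 1) q x) x := by
  have hx2 : 0 < x / 2 := by linarith
  have hdiff := hasDerivAt_integral_of_dominated_loc_of_deriv_le (μ := volume.restrict (Ioi 0))
    (F := fun y t => kummerIntegrand s q y t) (F' := fun y t => -kummerIntegrand (s + 1) q y t)
    (bound := kummerIntegrand (s + 1) q (x / 2)) (Metric.ball_mem_nhds x hx2)
    (Eventually.of_forall fun y =>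
      (continuousOn_kummerIntegrand s q y).aestronglyMeasurable measurableSet_Ioi)
    (integrableOn_kummerIntegrand q hs hx)
    ((continuousOn_kummerIntegrand (s + 1) q x).neg.aestronglyMeasurable measurableSet_Ioi)
    ?_ (integrableOn_kummerIntegrand q (by linarith) hx2) ?_
  · rw [kummerIntegral, ← integral_neg]
    exact hdiff.2
  all_goals refine (ae_restrict_iff' measurableSet_Ioi).2 (Eventually.of_forall
    fun t (ht : 0 < t) y hy => ?_)
  · have hy : x / 2 ≤ y := by
      rw [Metric.mem_ball, Real.dist_eq, abs_lt] at hy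
      linarith
    rw [norm_neg, Real.norm_of_nonneg (kummerIntegrand_nonneg _ _ _ ht.le)]
    unfold kummerIntegrand
    gcongr exp ?_ * _ * _
    nlinarith
  · exact hasDerivAt_kummerIntegrand_param s q ht y

lemma deriv_deriv_kummerIntegral {s x : ℝ} (q : ℝ) (hs : 0 < s) (hx : 0 < x) :
    deriv (deriv (kummerIntegral s q)) x = kummerIntegral (s + 2) q x := by
  have hderiv : deriv (kummerIntegral s q) =ᶠ[𝓝 x] -kummerIntegral (s + 1) q :=
    eventually_of_mem (Ioi_mem_nhds hx) fun y hy => (hasDerivAt_kummerIntegral q hs hy).deriv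
  rw [hderiv.deriv_eq, deriv.neg, (hasDerivAt_kummerIntegral q (by linarith) hx).deriv, neg_neg,
    add_assoc, one_add_one_eq_two]

lemma hasDerivAt_kummerPrimitive (s q x : ℝ) {t : ℝ} (ht : 0 < t) :
    HasDerivAt (fun t => exp (-t * x) * t ^ s * (1 + t) ^ (q + 1))
      (s * kummerIntegrand s q x t + (s + q + 1 - x) * kummerIntegrand (s + 1) q x t
        - x * kummerIntegrand (s + 2) q x t) t := by
  have h1t : 0 < 1 + t := by linarith
  have hexp : HasDerivAt (fun t => exp (-t * x)) (exp (-t * x) * -x) t := by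
    simpa using ((hasDerivAt_id t).neg.mul_const x).exp
  have hpow : HasDerivAt (fun t => t ^ s) (s * t ^ (s - 1)) t :=
    hasDerivAt_rpow_const (Or.inl ht.ne')
  have hpow' : HasDerivAt (fun t => (1 + t) ^ (q + 1)) ((q + 1) * (1 + t) ^ q) t := by
    simpa [Function.comp_def] using (hasDerivAt_rpow_const (p := q + 1) (Or.inl h1t.ne')).comp t
      ((hasDerivAt_id t).const_add 1)
  refine ((hexp.mul hpow).mul hpow').congr_deriv ?_
  have hs0 : t ^ s = t ^ (s - 1) * t := by rw [← rpow_add_one ht.ne', sub_add_cancel]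
  have hs1 : t ^ (s + 1 - 1) = t ^ (s - 1) * t := by rw [add_sub_cancel_right, hs0]
  have hs2 : t ^ (s + 2 - 1) = t ^ (s - 1) * t * t := by
    rw [← rpow_add_one ht.ne', ← rpow_add_one ht.ne']; ring_nf
  have hq : (1 + t) ^ (q + 1) = (1 + t) ^ q * (1 + t) := rpow_add_one h1t.ne' q
  simp only [kummerIntegrand, Pi.mul_apply]
  rw [hs0, hs1, hs2, hq]
  ring

lemma tendsto_kummerPrimitive_atTop (s q : ℝ) {x : ℝ} (hx : 0 < x) :
    Tendsto (fun t => exp (-t * x) * t ^ s * (1 + t) ^ q) atTop (𝓝 0) := by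
  have hdom : Tendsto (fun t => 2 ^ |q| * (t ^ s * exp (-x * t) + t ^ (s + |q|) * exp (-x * t)))
      atTop (𝓝 0) := by
    simpa using ((tendsto_rpow_mul_exp_neg_mul_atTop_nhds_zero s x hx).add
      (tendsto_rpow_mul_exp_neg_mul_atTop_nhds_zero (s + |q|) x hx)).const_mul (2 ^ |q|)
  refine tendsto_of_tendsto_of_tendsto_of_le_of_le' tendsto_const_nhds hdom ?_ ?_
  · filter_upwards [eventually_ge_atTop 0] with t ht
    have : 0 ≤ 1 + t := by linarith
    positivity
  · filter_upwards [eventually_gt_atTop 0] with t ht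
    rw [show -x * t = -t * x by ring, rpow_add ht]
    calc exp (-t * x) * t ^ s * (1 + t) ^ q
        ≤ exp (-t * x) * t ^ s * (2 ^ |q| * (1 + t ^ |q|)) := by
          gcongr; exact one_add_rpow_le_two_rpow_abs_mul ht.le q
      _ = _ := by ring

lemma kummerIntegral_recurrence {s x : ℝ} (q : ℝ) (hs : 0 < s) (hx : 0 < x) :
    s * kummerIntegral s q x + (s + q + 1 - x) * kummerIntegral (s + 1) q x
      - x * kummerIntegral (s + 2) q x = 0 := by
  have h0 := (integrableOn_kummerIntegrand q hs hx).const_mul s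
  have h1 := (integrableOn_kummerIntegrand q (by linarith : 0 < s + 1) hx).const_mul
    (s + q + 1 - x)
  have h2 := (integrableOn_kummerIntegrand q (by linarith : 0 < s + 2) hx).const_mul x
  have hcont : ContinuousWithinAt (fun t => exp (-t * x) * t ^ s * (1 + t) ^ (q + 1)) (Ici 0) 0 :=
    ContinuousAt.continuousWithinAt <|
      ((by fun_prop : Continuous fun t => exp (-t * x)).continuousAt.mul
        (continuousAt_rpow_const 0 s (Or.inr hs.le))).mul
        ((continuousAt_const.add continuousAt_id).rpow_const (Or.inl (by norm_num)))
  have hftc := integral_Ioi_of_hasDerivAt_of_tendsto hcont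
    (fun t ht => hasDerivAt_kummerPrimitive s q x ht) ((h0.add h1).sub h2)
    (tendsto_kummerPrimitive_atTop s (q + 1) hx)
  rw [integral_sub (h0.fun_add h1) h2, integral_add h0 h1, integral_const_mul, integral_const_mul,
    integral_const_mul] at hftc
  simpa [kummerIntegral, zero_rpow hs.ne'] using hftc

theorem kummerV_solves_kummer_general (a b : ℝ) (ha' : 0 < a) :
    ∀ x > (0 : ℝ),
      x * deriv (deriv (kummerV a b)) x + (b - x) * deriv (kummerV a b) x
        - a * kummerV a b x = 0 := by
  intro x hx
  have hV : kummerV a b = fun y => (Gamma a)⁻¹ * kummerIntegral a (b - a - 1) y := rfl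
  have hV' : deriv (kummerV a b) =
      fun y => (Gamma a)⁻¹ * deriv (kummerIntegral a (b - a - 1)) y := by
    rw [hV, deriv_const_mul_field']
  rw [hV', deriv_const_mul_field', hV]
  beta_reduce
  rw [deriv_deriv_kummerIntegral _ ha' hx, (hasDerivAt_kummerIntegral _ ha' hx).deriv]
  linear_combination -(Gamma a)⁻¹ * kummerIntegral_recurrence (b - a - 1) ha' hx

theorem kummerV_solves_kummer (a b : ℝ) (ha : 0 ≤ a) (hb : 1 < b) (ha' : 0 < a) :
    ∀ x > (0 : ℝ),
      x * deriv (deriv (kummerV a b)) x + (b - x) * deriv (kummerV a b) x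
        - a * kummerV a b x = 0 :=
  kummerV_solves_kummer_general a b ha'
end

section
/- Let a > 0, 1 < b < 2. Then lim_{x→0⁺} x^{b−1} V(a,b,x) = Γ(b−1)/Γ(a), where V(a,b,x) = Γ(a)⁻¹ ∫₀^∞ e^{−tx} t^{a−1}(1+t)^{b−a−1} dt. -/
/-!
Substituting `t = s / x` turns `x ^ (b - 1) * kummerV a b x` into
`Γ(a)⁻¹ * ∫₀^∞ e^{-s} s^{a-1} (x + s)^{b-a-1} ds`. As `x → 0⁺` the integrand tends to
`e^{-s} s^{b-2}`, the Euler integrand of `Γ(b - 1)`, and for `x ≤ 1` it is dominated by a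
multiple of the Euler integrands of `Γ(a)` and `Γ(b - 1)`, so dominated convergence applies.
-/

open Real Filter

open MeasureTheory Set

theorem integral_exp_neg_mul_rpow_mul_one_add_rpow {x : ℝ} (hx : 0 < x) (a c : ℝ) :
    ∫ t in Ioi (0 : ℝ), exp (-t * x) * t ^ (a - 1) * (1 + t) ^ c
      = x ^ (-(a + c)) * ∫ s in Ioi (0 : ℝ), exp (-s) * s ^ (a - 1) * (x + s) ^ c := by
  set g : ℝ → ℝ := fun s => exp (-s) * s ^ (a - 1) * (x + s) ^ c
  have hx_pow : x ^ (1 - (a + c)) * (x ^ (a - 1) * x ^ c) = 1 := by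
    rw [← rpow_add hx, ← rpow_add hx, show 1 - (a + c) + (a - 1 + c) = 0 by ring, rpow_zero]
  have h_pointwise : ∀ t ∈ Ioi (0 : ℝ),
      exp (-t * x) * t ^ (a - 1) * (1 + t) ^ c = x ^ (1 - (a + c)) * g (t * x) := by
    intro t (ht : 0 < t)
    simp only [g]
    rw [mul_rpow ht.le hx.le, show x + t * x = x * (1 + t) by ring,
      mul_rpow hx.le (by positivity), neg_mul]
    linear_combination (-(exp (-(t * x)) * t ^ (a - 1) * (1 + t) ^ c)) * hx_pow
  calc ∫ t in Ioi (0 : ℝ), exp (-t * x) * t ^ (a - 1) * (1 + t) ^ c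
      = ∫ t in Ioi (0 : ℝ), x ^ (1 - (a + c)) * g (t * x) :=
        setIntegral_congr_fun measurableSet_Ioi h_pointwise
    _ = x ^ (1 - (a + c)) * (x⁻¹ * ∫ s in Ioi (0 : ℝ), g s) := by
        rw [integral_const_mul, integral_comp_mul_right_Ioi g 0 hx, zero_mul, smul_eq_mul]
    _ = x ^ (-(a + c)) * ∫ s in Ioi (0 : ℝ), g s := by
        rw [← mul_assoc, ← rpow_neg_one x, ← rpow_add hx]
        ring_nf

theorem rpow_add_le_of_nonneg_of_le_one {x s : ℝ} (hx₀ : 0 ≤ x) (hx₁ : x ≤ 1) (hs : 0 < s)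
    (c : ℝ) : (x + s) ^ c ≤ (2 ^ c + 1) * (1 + s ^ c) := by
  have h2c : 0 < (2 : ℝ) ^ c := by positivity
  have hsc : 0 < s ^ c := by positivity
  rcases lt_or_ge c 0 with hc | hc
  · calc (x + s) ^ c ≤ s ^ c := rpow_le_rpow_of_nonpos hs (by linarith) hc.le
      _ ≤ (2 ^ c + 1) * (1 + s ^ c) := by nlinarith
  rcases le_or_gt s 1 with hs₁ | hs₁
  · calc (x + s) ^ c ≤ 2 ^ c := rpow_le_rpow (by positivity) (by linarith) hc
      _ ≤ (2 ^ c + 1) * (1 + s ^ c) := by nlinarith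
  · calc (x + s) ^ c ≤ (2 * s) ^ c := rpow_le_rpow (by positivity) (by linarith) hc
      _ = 2 ^ c * s ^ c := mul_rpow (by norm_num) hs.le
      _ ≤ (2 ^ c + 1) * (1 + s ^ c) := by nlinarith

theorem tendsto_integral_exp_neg_mul_rpow_mul_add_rpow {a c : ℝ} (ha : 0 < a) (hac : 0 < a + c) :
    Tendsto (fun x : ℝ => ∫ s in Ioi (0 : ℝ), exp (-s) * s ^ (a - 1) * (x + s) ^ c)
      (nhdsWithin 0 (Ioi 0)) (nhds (Gamma (a + c))) := by
  have h_exp : ∀ s : ℝ, 0 < s → s ^ (a - 1) * s ^ c = s ^ (a + c - 1) := fun s hs => by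
    rw [← rpow_add hs]; ring_nf
  rw [Gamma_eq_integral hac]
  refine tendsto_integral_filter_of_dominated_convergence
    (fun s => (2 ^ c + 1) * (exp (-s) * s ^ (a - 1) + exp (-s) * s ^ (a + c - 1)))
    (Eventually.of_forall fun x => by fun_prop) ?_
    (((GammaIntegral_convergent ha).add (GammaIntegral_convergent hac)).const_mul _) ?_
  · filter_upwards [Ioc_mem_nhdsGT zero_lt_one] with x ⟨hx₀, hx₁⟩
    rw [ae_restrict_iff' measurableSet_Ioi]
    filter_upwards with s (hs : 0 < s)
    rw [norm_of_nonneg (by positivity), ← h_exp s hs]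
    calc exp (-s) * s ^ (a - 1) * (x + s) ^ c
        ≤ exp (-s) * s ^ (a - 1) * ((2 ^ c + 1) * (1 + s ^ c)) := by
          gcongr
          exact rpow_add_le_of_nonneg_of_le_one hx₀.le hx₁ hs c
      _ = _ := by ring
  · rw [ae_restrict_iff' measurableSet_Ioi]
    filter_upwards with s (hs : 0 < s)
    have h_cont : ContinuousAt (fun x : ℝ => exp (-s) * s ^ (a - 1) * (x + s) ^ c) 0 :=
      continuousAt_const.mul <| (continuousAt_id.add continuousAt_const).rpow_const
        (Or.inl (by simpa using hs.ne'))
    have h_lim := tendsto_nhdsWithin_of_tendsto_nhds (s := Ioi 0) h_cont.tendsto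
    rwa [zero_add, mul_assoc, h_exp s hs] at h_lim

theorem kummerV_asymptotics_at_zero_general (a b : ℝ) (ha : 0 < a) (hb1 : 1 < b) :
    Tendsto (fun x : ℝ => x ^ (b - 1) * kummerV a b x)
      (nhdsWithin 0 (Set.Ioi 0)) (nhds (Real.Gamma (b - 1) / Real.Gamma a)) := by
  have hab : a + (b - a - 1) = b - 1 := by ring
  have h_lim := (tendsto_integral_exp_neg_mul_rpow_mul_add_rpow ha
    (hab ▸ sub_pos.mpr hb1)).const_mul (Gamma a)⁻¹
  rw [hab, ← div_eq_inv_mul] at h_lim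
  refine h_lim.congr' ?_
  filter_upwards [self_mem_nhdsWithin] with x (hx : 0 < x)
  have hx_pow : x ^ (b - 1) * x ^ (-(b - 1)) = 1 := by
    rw [← rpow_add hx, add_neg_cancel, rpow_zero]
  rw [kummerV, integral_exp_neg_mul_rpow_mul_one_add_rpow hx, hab,
    mul_left_comm (Gamma a)⁻¹, ← mul_assoc, hx_pow, one_mul]

theorem kummerV_asymptotics_at_zero (a b : ℝ) (ha : 0 < a) (hb1 : 1 < b) (hb2 : b < 2) :
    Tendsto (fun x : ℝ => x ^ (b - 1) * kummerV a b x)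
      (nhdsWithin 0 (Set.Ioi 0)) (nhds (Real.Gamma (b - 1) / Real.Gamma a)) :=
  kummerV_asymptotics_at_zero_general a b ha hb1
end

section
/- Let γ ∈ (0,1), λ ≠ 0 and k > 0, and let φ : [0,∞) → ℝ be the solution of q φ'' + (1−γ) φ' − λ² q φ − |λ| k φ = 0 with φ(0)=1 and φ(q) → 0 as q → ∞, given explicitly by φ(q) = e^{−|λ| q} (2|λ| q)^γ (Γ((1+γ+k)/2)/Γ(γ)) V((1+γ+k)/2, 1+γ, 2|λ| q). Then as q → 0⁺, φ(q) = 1 − (Γ(1−γ)/Γ(1+γ)) · (Γ((1+γ+k)/2)/Γ((1−γ+k)/2)) · (2|λ| q)^γ + O(q). -/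
/-!
Write `x = 2|λ|q` and `a = (1+γ+k)/2`. The substitution `s = x t` turns `x^γ Γ(a) V(a, 1+γ, x)`
into `J(x) = ∫₀^∞ e^{-s} s^{a-1} (x+s)^{γ-a} ds`, so that `φ(q) = e^{-|λ|q} J(x) / Γ(γ)` and
`J(0) = Γ(γ)`. By the fundamental theorem of calculus in `x` and Fubini,
`J(x) - Γ(γ) = (γ-a) ∫₀^x K(u) du` with `K(u) = ∫₀^∞ e^{-s} s^{a-1} (u+s)^{γ-a-1} ds`.
Replacing `e^{-s}` by `1` in `K(u)` gives, after scaling `s = u t`, `u^{γ-1}` times the Beta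
integral `∫₀^∞ t^{a-1} (1+t)^{γ-a-1} dt = Γ(a) Γ(1-γ) / Γ(a+1-γ)`, and since
`|e^{-s} - 1| ≤ min 1 s` the error is bounded uniformly in `u`. Integrating in `u`,
`J(x) = Γ(γ) - (a-γ) Γ(a) Γ(1-γ) / (γ Γ(a+1-γ)) x^γ + O(x)`, which is the claim after the Gamma
recursion; the factor `e^{-|λ|q} = 1 + O(q)` does not affect it.
-/

open Real Filter Asymptotics

open MeasureTheory Set Topology

lemma integrableOn_Ioi_of_abs_le_rpow {f : ℝ → ℝ} {p q c₁ c₂ : ℝ} (hf : Measurable f)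
    (hp : -1 < p) (hq : q < -1) (h₁ : ∀ t ∈ Ioc (0 : ℝ) 1, |f t| ≤ c₁ * t ^ p)
    (h₂ : ∀ t ∈ Ioi (1 : ℝ), |f t| ≤ c₂ * t ^ q) :
    IntegrableOn f (Ioi 0) := by
  rw [← Ioc_union_Ioi_eq_Ioi zero_le_one]
  refine IntegrableOn.union ?_ ?_
  · refine (((intervalIntegral.intervalIntegrable_rpow' hp).1).const_mul c₁).mono'
      hf.aestronglyMeasurable ?_
    filter_upwards [ae_restrict_mem measurableSet_Ioc] with t ht using h₁ t ht
  · refine ((integrableOn_Ioi_rpow_of_lt hq one_pos).const_mul c₂).mono'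
      hf.aestronglyMeasurable ?_
    filter_upwards [ae_restrict_mem measurableSet_Ioi] with t ht using h₂ t ht

lemma abs_integral_Ioi_le_of_abs_le_rpow {f : ℝ → ℝ} {p q c₁ c₂ : ℝ} (hf : Measurable f)
    (hp : -1 < p) (hq : q < -1) (h₁ : ∀ t ∈ Ioc (0 : ℝ) 1, |f t| ≤ c₁ * t ^ p)
    (h₂ : ∀ t ∈ Ioi (1 : ℝ), |f t| ≤ c₂ * t ^ q) :
    |∫ t in Ioi 0, f t| ≤ c₁ / (p + 1) - c₂ / (q + 1) := by
  have hf' := integrableOn_Ioi_of_abs_le_rpow hf hp hq h₁ h₂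
  rw [← Ioc_union_Ioi_eq_Ioi zero_le_one] at hf' ⊢
  rw [setIntegral_union (Ioc_disjoint_Ioi le_rfl) measurableSet_Ioi
    (hf'.mono_set subset_union_left) (hf'.mono_set subset_union_right)]
  have hI₁ : ∫ t in Ioc (0 : ℝ) 1, c₁ * t ^ p = c₁ / (p + 1) := by
    rw [← intervalIntegral.integral_of_le zero_le_one, intervalIntegral.integral_const_mul,
      integral_rpow (Or.inl hp), one_rpow, zero_rpow (by linarith)]
    ring
  have hI₂ : ∫ t in Ioi (1 : ℝ), c₂ * t ^ q = -(c₂ / (q + 1)) := by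
    rw [integral_const_mul, integral_Ioi_rpow_of_lt hq one_pos, one_rpow]
    ring
  calc |(∫ t in Ioc 0 1, f t) + ∫ t in Ioi 1, f t|
      ≤ |∫ t in Ioc 0 1, f t| + |∫ t in Ioi 1, f t| := abs_add_le _ _
    _ ≤ (∫ t in Ioc (0 : ℝ) 1, c₁ * t ^ p) + ∫ t in Ioi (1 : ℝ), c₂ * t ^ q := by
        gcongr
        · exact norm_integral_le_of_norm_le
            ((intervalIntegral.intervalIntegrable_rpow' hp).1.const_mul c₁)
            ((ae_restrict_mem measurableSet_Ioc).mono fun t ht =>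
              (norm_eq_abs (f t)).trans_le (h₁ t ht))
        · exact norm_integral_le_of_norm_le
            ((integrableOn_Ioi_rpow_of_lt hq one_pos).const_mul c₂)
            ((ae_restrict_mem measurableSet_Ioi).mono fun t ht =>
              (norm_eq_abs (f t)).trans_le (h₂ t ht))
    _ = c₁ / (p + 1) - c₂ / (q + 1) := by rw [hI₁, hI₂]; ring

lemma integrable_prod_of_nonneg {α β : Type*} [MeasurableSpace α] [MeasurableSpace β]
    {μ : Measure α} {ν : Measure β} [SFinite ν] {f : α → β → ℝ}
    (hf : AEStronglyMeasurable (Function.uncurry f) (μ.prod ν))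
    (hf₀ : ∀ᵐ x ∂μ, 0 ≤ᵐ[ν] f x) (hfx : ∀ᵐ x ∂μ, Integrable (f x) ν)
    (hint : Integrable (fun x => ∫ y, f x y ∂ν) μ) :
    Integrable (Function.uncurry f) (μ.prod ν) := by
  refine (integrable_prod_iff hf).2 ⟨hfx, hint.congr ?_⟩
  filter_upwards [hf₀] with x hx
  exact integral_congr_ae (hx.mono fun y hy => (Real.norm_of_nonneg hy).symm)

lemma integral_Ioi_mul_rpow_mul_add_rpow (f : ℝ → ℝ) (p r : ℝ) {u : ℝ} (hu : 0 < u) :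
    ∫ s in Ioi 0, f s * s ^ p * (u + s) ^ r
      = u ^ (p + r + 1) * ∫ t in Ioi 0, f (u * t) * t ^ p * (1 + t) ^ r := by
  have hscale := integral_comp_mul_left_Ioi (fun s => f s * s ^ p * (u + s) ^ r) 0 hu
  rw [mul_zero] at hscale
  calc ∫ s in Ioi 0, f s * s ^ p * (u + s) ^ r
      = ∫ t in Ioi 0, u * (f (u * t) * (u * t) ^ p * (u + u * t) ^ r) := by
        rw [integral_const_mul, hscale, smul_eq_mul, mul_inv_cancel_left₀ hu.ne']
    _ = ∫ t in Ioi 0, u ^ (p + r + 1) * (f (u * t) * t ^ p * (1 + t) ^ r) := by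
        refine setIntegral_congr_fun measurableSet_Ioi fun t (ht : 0 < t) => ?_
        rw [show u + u * t = u * (1 + t) by ring, mul_rpow hu.le ht.le,
          mul_rpow hu.le (by positivity), rpow_add hu, rpow_add hu, rpow_one]
        ring
    _ = _ := integral_const_mul _ _

lemma rpow_mul_add_rpow_le {s u p r : ℝ} (hs : 0 < s) (hu : 0 ≤ u) (hr : r ≤ 0) :
    s ^ p * (u + s) ^ r ≤ s ^ (p + r) := by
  rw [rpow_add hs]
  exact mul_le_mul_of_nonneg_left (rpow_le_rpow_of_nonpos hs (by linarith) hr)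
    (rpow_nonneg hs.le _)

lemma integrableOn_rpow_mul_add_rpow {a r u : ℝ} (ha : 0 < a) (hr : a + r < 0) (hu : 0 < u) :
    IntegrableOn (fun s => s ^ (a - 1) * (u + s) ^ r) (Ioi 0) := by
  refine integrableOn_Ioi_of_abs_le_rpow (c₁ := u ^ r) (c₂ := 1) (by fun_prop)
    (show -1 < a - 1 by linarith) (show a - 1 + r < -1 by linarith) ?_ ?_
  · rintro s ⟨hs, -⟩
    rw [abs_of_nonneg (by positivity), mul_comm (u ^ r)]
    exact mul_le_mul_of_nonneg_left (rpow_le_rpow_of_nonpos hu (by linarith) (by linarith))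
      (by positivity)
  · intro s (hs : 1 < s)
    rw [abs_of_nonneg (by positivity), one_mul]
    exact rpow_mul_add_rpow_le (by linarith) hu.le (by linarith)

lemma integral_rpow_mul_one_add_rpow_neg_eq_Gamma {a b : ℝ} (ha : 0 < a) (hb : 0 < b) :
    ∫ t in Ioi 0, t ^ (a - 1) * (1 + t) ^ (-(a + b)) = Gamma a * Gamma b / Gamma (a + b) := by
  set F : ℝ → ℝ → ℝ := fun t s => t ^ (a - 1) * (s ^ (a + b - 1) * exp (-((1 + t) * s)))
  have hab : 0 < a + b := by linarith
  have hinner_s : ∀ t : ℝ, 0 < t → ∫ s in Ioi 0, F t s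
      = Gamma (a + b) * (t ^ (a - 1) * (1 + t) ^ (-(a + b))) := fun t ht => by
    rw [integral_const_mul, integral_rpow_mul_exp_neg_mul_Ioi hab (by linarith), one_div,
      inv_rpow (by linarith), ← rpow_neg (by linarith)]
    ring
  have hinner_t : ∀ s : ℝ, 0 < s → ∫ t in Ioi 0, F t s
      = Gamma a * (exp (-s) * s ^ (b - 1)) := fun s hs => by
    have hF : ∀ t, F t s = s ^ (a + b - 1) * exp (-s) * (t ^ (a - 1) * exp (-(s * t))) :=
      fun t => by simp only [F]; rw [show -((1 + t) * s) = -s + -(s * t) by ring, exp_add]; ring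
    simp_rw [hF]
    rw [integral_const_mul, integral_rpow_mul_exp_neg_mul_Ioi ha hs, one_div, inv_rpow hs.le,
      ← rpow_neg hs.le, show b - 1 = a + b - 1 + -a by ring, rpow_add hs]
    ring
  have hF_int : Integrable (Function.uncurry F)
      ((volume.restrict (Ioi 0)).prod (volume.restrict (Ioi 0))) := by
    refine integrable_prod_of_nonneg (by fun_prop) ?_ ?_ ?_
    · filter_upwards [ae_restrict_mem measurableSet_Ioi] with t (ht : 0 < t)
      filter_upwards [ae_restrict_mem measurableSet_Ioi] with s (hs : 0 < s)
      positivity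
    · filter_upwards [ae_restrict_mem measurableSet_Ioi] with t (ht : 0 < t)
      refine Integrable.of_integral_ne_zero ?_
      rw [hinner_s t ht]
      have := Gamma_pos_of_pos hab
      positivity
    · refine Integrable.congr (((integrableOn_rpow_mul_add_rpow (r := -(a + b)) ha
        (by linarith) one_pos)).const_mul (Gamma (a + b))) ?_
      filter_upwards [ae_restrict_mem measurableSet_Ioi] with t ht
      exact (hinner_s t ht).symm
  have hswap := integral_integral_swap hF_int
  rw [setIntegral_congr_fun measurableSet_Ioi hinner_s,
    setIntegral_congr_fun measurableSet_Ioi hinner_t, integral_const_mul,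
    integral_const_mul, ← Gamma_eq_integral hb] at hswap
  rw [eq_div_iff (Gamma_pos_of_pos hab).ne', ← hswap]
  ring

lemma abs_exp_neg_sub_one_le {s : ℝ} (hs : 0 ≤ s) : |exp (-s) - 1| ≤ min 1 s := by
  rw [abs_of_nonpos (by simpa using hs)]
  exact le_min (by linarith [exp_pos (-s)]) (by linarith [add_one_le_exp (-s)])

lemma rpow_add_sub_rpow_eq_integral {x s r : ℝ} (hx : 0 ≤ x) (hs : 0 < s) :
    (x + s) ^ r - s ^ r = r * ∫ u in Ioc 0 x, (u + s) ^ (r - 1) := by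
  rcases eq_or_ne r 0 with rfl | hr
  · simp
  have h0 : (0 : ℝ) ∉ uIcc s (x + s) := by
    rw [uIcc_of_le (by linarith)]; exact fun h => (h.1.trans_lt' hs).false
  rw [← intervalIntegral.integral_of_le hx,
    intervalIntegral.integral_comp_add_right (fun v => v ^ (r - 1)),
    zero_add, integral_rpow (Or.inr ⟨by simpa using hr, h0⟩), sub_add_cancel]
  field_simp

lemma integral_rpow_mul_add_rpow_eq_Gamma {a g u : ℝ} (ha : 0 < a) (hg : g < 1) (hu : 0 < u) :
    ∫ s in Ioi 0, s ^ (a - 1) * (u + s) ^ (g - a - 1)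
      = u ^ (g - 1) * (Gamma a * Gamma (1 - g) / Gamma (a + 1 - g)) := by
  have hscale := integral_Ioi_mul_rpow_mul_add_rpow (fun _ => 1) (a - 1) (g - a - 1) hu
  simp only [one_mul] at hscale
  rw [hscale, show a - 1 + (g - a - 1) + 1 = g - 1 by ring, show g - a - 1 = -(a + (1 - g)) by ring,
    integral_rpow_mul_one_add_rpow_neg_eq_Gamma ha (by linarith),
    show a + (1 - g) = a + 1 - g by ring]

lemma abs_integral_exp_neg_mul_rpow_mul_add_rpow_sub_le {a g u : ℝ} (ha : 0 < a) (hg₀ : 0 < g)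
    (hg₁ : g < 1) (hu : 0 < u) :
    |(∫ s in Ioi 0, exp (-s) * s ^ (a - 1) * (u + s) ^ (g - a - 1))
        - u ^ (g - 1) * (Gamma a * Gamma (1 - g) / Gamma (a + 1 - g))| ≤ 1 / g + 1 / (1 - g) := by
  have hR : ∀ s, 0 < s → |(exp (-s) - 1) * s ^ (a - 1) * (u + s) ^ (g - a - 1)|
      ≤ |exp (-s) - 1| * s ^ (g - 2) := fun s hs => by
    rw [mul_assoc, abs_mul, abs_of_nonneg (a := s ^ (a - 1) * _) (by positivity)]
    refine mul_le_mul_of_nonneg_left ?_ (abs_nonneg _)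
    exact (rpow_mul_add_rpow_le hs hu.le (by linarith : g - a - 1 ≤ 0)).trans_eq (by ring_nf)
  have hR₁ : ∀ s ∈ Ioc (0 : ℝ) 1,
      |(exp (-s) - 1) * s ^ (a - 1) * (u + s) ^ (g - a - 1)| ≤ 1 * s ^ (g - 1) := by
    rintro s ⟨hs, -⟩
    refine (hR s hs).trans ?_
    rw [one_mul, show g - 1 = 1 + (g - 2) by ring, rpow_add hs, rpow_one]
    exact mul_le_mul_of_nonneg_right ((abs_exp_neg_sub_one_le hs.le).trans (min_le_right _ _))
      (by positivity)
  have hR₂ : ∀ s ∈ Ioi (1 : ℝ),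
      |(exp (-s) - 1) * s ^ (a - 1) * (u + s) ^ (g - a - 1)| ≤ 1 * s ^ (g - 2) := by
    intro s (hs : 1 < s)
    refine (hR s (by linarith)).trans (mul_le_mul_of_nonneg_right ?_ (by positivity))
    exact (abs_exp_neg_sub_one_le (by linarith)).trans (min_le_left _ _)
  have hmeas : Measurable fun s => (exp (-s) - 1) * s ^ (a - 1) * (u + s) ^ (g - a - 1) := by
    fun_prop
  have hsplit : ∫ s in Ioi 0, exp (-s) * s ^ (a - 1) * (u + s) ^ (g - a - 1)
      = (∫ s in Ioi 0, (exp (-s) - 1) * s ^ (a - 1) * (u + s) ^ (g - a - 1))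
        + ∫ s in Ioi 0, s ^ (a - 1) * (u + s) ^ (g - a - 1) := by
    rw [← integral_add (integrableOn_Ioi_of_abs_le_rpow hmeas (by linarith) (by linarith) hR₁ hR₂)
      (integrableOn_rpow_mul_add_rpow ha (by linarith) hu)]
    congr 1 with s
    ring
  rw [hsplit, integral_rpow_mul_add_rpow_eq_Gamma ha hg₁ hu, add_sub_cancel_right]
  convert abs_integral_Ioi_le_of_abs_le_rpow hmeas (by linarith) (by linarith) hR₁ hR₂ using 1
  rw [show g - 2 + 1 = -(1 - g) by ring, show g - 1 + 1 = g by ring, div_neg, sub_neg_eq_add]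

noncomputable def shiftedGammaIntegral (a g x : ℝ) : ℝ :=
  ∫ s in Ioi 0, exp (-s) * s ^ (a - 1) * (x + s) ^ (g - a)

lemma shiftedGammaIntegral_convergent {a g x : ℝ} (hg : 0 < g) (hga : g ≤ a) (hx : 0 ≤ x) :
    IntegrableOn (fun s => exp (-s) * s ^ (a - 1) * (x + s) ^ (g - a)) (Ioi 0) := by
  refine (GammaIntegral_convergent hg).mono' (by fun_prop) ?_
  filter_upwards [ae_restrict_mem measurableSet_Ioi] with s (hs : 0 < s)
  rw [norm_of_nonneg (by positivity), mul_assoc]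
  exact mul_le_mul_of_nonneg_left
    ((rpow_mul_add_rpow_le hs hx (by linarith)).trans_eq (by ring_nf)) (exp_pos _).le

lemma exp_neg_mul_rpow_mul_add_rpow_sub_eq_integral {a g x s : ℝ} (hx : 0 ≤ x) (hs : 0 < s) :
    exp (-s) * s ^ (a - 1) * (x + s) ^ (g - a) - exp (-s) * s ^ (g - 1)
      = (g - a) * ∫ u in Ioc 0 x, exp (-s) * s ^ (a - 1) * (u + s) ^ (g - a - 1) := by
  rw [integral_const_mul, mul_left_comm, ← rpow_add_sub_rpow_eq_integral hx hs,
    show g - 1 = a - 1 + (g - a) by ring, rpow_add hs]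
  ring

lemma integrable_exp_neg_mul_rpow_mul_add_rpow_prod {a g x : ℝ} (hg : 0 < g) (hga : g < a)
    (hx : 0 ≤ x) :
    Integrable (Function.uncurry fun s u => exp (-s) * s ^ (a - 1) * (u + s) ^ (g - a - 1))
      ((volume.restrict (Ioi 0)).prod (volume.restrict (Ioc 0 x))) := by
  refine integrable_prod_of_nonneg (by fun_prop) ?_ ?_ ?_
  · filter_upwards [ae_restrict_mem measurableSet_Ioi] with s (hs : 0 < s)
    filter_upwards [ae_restrict_mem measurableSet_Ioc] with u hu
    have : 0 < u + s := by linarith [hu.1]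
    positivity
  · filter_upwards [ae_restrict_mem measurableSet_Ioi] with s (hs : 0 < s)
    refine ContinuousOn.integrableOn_Icc (continuousOn_const.mul ?_) |>.mono_set Ioc_subset_Icc_self
    exact (continuousOn_id.add continuousOn_const).rpow_const
      fun u hu => Or.inl (by linarith [hu.1] : u + s ≠ 0)
  · refine (((shiftedGammaIntegral_convergent hg hga.le hx).sub
      (GammaIntegral_convergent hg)).const_mul (g - a)⁻¹).congr ?_
    filter_upwards [ae_restrict_mem measurableSet_Ioi] with s (hs : 0 < s)
    rw [Pi.sub_apply, exp_neg_mul_rpow_mul_add_rpow_sub_eq_integral hx hs,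
      inv_mul_cancel_left₀ (by linarith)]

lemma shiftedGammaIntegral_eq_Gamma_add_integral {a g x : ℝ} (hg : 0 < g) (hga : g < a)
    (hx : 0 ≤ x) :
    shiftedGammaIntegral a g x = Gamma g
      + (g - a) * ∫ u in Ioc 0 x, ∫ s in Ioi 0, exp (-s) * s ^ (a - 1) * (u + s) ^ (g - a - 1) := by
  have hdiff := integral_sub (shiftedGammaIntegral_convergent hg hga.le hx)
    (GammaIntegral_convergent hg)
  rw [← Gamma_eq_integral hg, setIntegral_congr_fun measurableSet_Ioi
    fun s hs => exp_neg_mul_rpow_mul_add_rpow_sub_eq_integral hx hs, integral_const_mul,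
    integral_integral_swap (integrable_exp_neg_mul_rpow_mul_add_rpow_prod hg hga hx)] at hdiff
  rw [shiftedGammaIntegral, hdiff]
  ring

lemma abs_shiftedGammaIntegral_sub_le {a g x : ℝ} (hg₀ : 0 < g) (hg₁ : g < 1) (hga : g < a)
    (hx : 0 < x) :
    |shiftedGammaIntegral a g x
        - (Gamma g - (a - g) * (Gamma a * Gamma (1 - g) / Gamma (a + 1 - g)) / g * x ^ g)|
      ≤ (a - g) * (1 / g + 1 / (1 - g)) * x := by
  set B := Gamma a * Gamma (1 - g) / Gamma (a + 1 - g)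
  set K := fun u => ∫ s in Ioi 0, exp (-s) * s ^ (a - 1) * (u + s) ^ (g - a - 1)
  have hK : IntegrableOn K (Ioc 0 x) :=
    (integrable_exp_neg_mul_rpow_mul_add_rpow_prod hg₀ hga hx.le).integral_prod_right
  have hpow : IntegrableOn (fun u => u ^ (g - 1) * B) (Ioc 0 x) :=
    (intervalIntegral.intervalIntegrable_rpow' (by linarith)).1.mul_const B
  have hpow_eq : ∫ u in Ioc 0 x, u ^ (g - 1) * B = B * x ^ g / g := by
    rw [integral_mul_const, ← intervalIntegral.integral_of_le hx.le,
      integral_rpow (Or.inl (by linarith)), sub_add_cancel, zero_rpow hg₀.ne']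
    ring
  have hK_sub : |∫ u in Ioc 0 x, (K u - u ^ (g - 1) * B)| ≤ (1 / g + 1 / (1 - g)) * x := by
    have := norm_setIntegral_le_of_norm_le_const (μ := volume)
      (s := Ioc 0 x) (f := fun u => K u - u ^ (g - 1) * B) measure_Ioc_lt_top fun u hu =>
      abs_integral_exp_neg_mul_rpow_mul_add_rpow_sub_le (hg₀.trans hga) hg₀ hg₁ hu.1
    rwa [Real.volume_real_Ioc_of_le hx.le, sub_zero] at this
  calc _ = |(g - a) * ∫ u in Ioc 0 x, (K u - u ^ (g - 1) * B)| := by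
        rw [shiftedGammaIntegral_eq_Gamma_add_integral hg₀ hga hx.le, integral_sub hK hpow,
          hpow_eq]
        simp only [K]
        ring_nf
    _ = (a - g) * |∫ u in Ioc 0 x, (K u - u ^ (g - 1) * B)| := by
        rw [abs_mul, abs_of_neg (by linarith), neg_sub]
    _ ≤ (a - g) * (1 / g + 1 / (1 - g)) * x := by
        rw [mul_assoc]; gcongr

lemma shiftedGammaIntegral_div_Gamma_sub_isBigO {a g : ℝ} (hg₀ : 0 < g) (hg₁ : g < 1)
    (hga : g < a) :
    (fun x => shiftedGammaIntegral a g x / Gamma g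
        - (1 - Gamma (1 - g) / Gamma (1 + g) * (Gamma a / Gamma (a - g)) * x ^ g))
      =O[𝓝[>] 0] fun x => x := by
  have hΓ := Gamma_pos_of_pos hg₀
  have hconst : (a - g) * (Gamma a * Gamma (1 - g) / Gamma (a + 1 - g)) / g
      = Gamma g * (Gamma (1 - g) / Gamma (1 + g) * (Gamma a / Gamma (a - g))) := by
    rw [show a + 1 - g = (a - g) + 1 by ring, Gamma_add_one (sub_pos.2 hga).ne', add_comm 1 g,
      Gamma_add_one hg₀.ne']
    have := (sub_pos.2 hga).ne'
    field_simp
  refine IsBigO.of_bound ((a - g) * (1 / g + 1 / (1 - g)) / Gamma g) ?_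
  filter_upwards [self_mem_nhdsWithin] with x (hx : 0 < x)
  have hbound := abs_shiftedGammaIntegral_sub_le hg₀ hg₁ hga hx
  rw [hconst] at hbound
  have hsplit : shiftedGammaIntegral a g x / Gamma g
        - (1 - Gamma (1 - g) / Gamma (1 + g) * (Gamma a / Gamma (a - g)) * x ^ g)
      = (shiftedGammaIntegral a g x - (Gamma g
          - Gamma g * (Gamma (1 - g) / Gamma (1 + g) * (Gamma a / Gamma (a - g))) * x ^ g))
        / Gamma g := by
    field_simp
  rw [norm_eq_abs, norm_eq_abs, abs_of_pos hx, hsplit, abs_div, abs_of_pos hΓ, div_le_iff₀ hΓ]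
  exact hbound.trans_eq (by field_simp)

lemma rpow_mul_kummerV {a g x : ℝ} (hx : 0 < x) :
    x ^ g * kummerV a (1 + g) x = (Gamma a)⁻¹ * shiftedGammaIntegral a g x := by
  rw [shiftedGammaIntegral, integral_Ioi_mul_rpow_mul_add_rpow (fun s => exp (-s)) _ _ hx,
    show a - 1 + (g - a) + 1 = g by ring, kummerV, show 1 + g - a - 1 = g - a by ring]
  simp_rw [neg_mul, mul_comm _ x]
  ring

lemma tendsto_const_mul_nhdsGT_zero {c : ℝ} (hc : 0 < c) :
    Tendsto (fun q => c * q) (𝓝[>] 0) (𝓝[>] 0) :=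
  tendsto_nhdsWithin_of_tendsto_nhds_of_eventually_within _
    ((continuous_const_mul c).tendsto' 0 0 (mul_zero _) |>.mono_left nhdsWithin_le_nhds)
    (eventually_nhdsWithin_of_forall fun q (hq : 0 < q) => mul_pos hc hq)

lemma exp_neg_mul_mul_sub_isBigO {L b : ℝ} {f g : ℝ → ℝ}
    (hfg : (fun q => f q - g q) =O[𝓝[>] 0] fun q => q) (hg : Tendsto g (𝓝[>] 0) (𝓝 b)) :
    (fun q => exp (-L * q) * f q - g q) =O[𝓝[>] 0] fun q => q := by
  have hexp : (fun q => exp (-L * q) - 1) =O[𝓝[>] 0] fun q => q := by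
    simpa using (((hasDerivAt_id (0 : ℝ)).const_mul (-L)).exp.isBigO_sub).mono nhdsWithin_le_nhds
  have hexp_bdd : (fun q => exp (-L * q)) =O[𝓝[>] 0] fun _ => (1 : ℝ) :=
    ((continuous_const.mul continuous_id).rexp.tendsto 0).mono_left nhdsWithin_le_nhds
      |>.isBigO_one ℝ
  refine (((hexp_bdd.mul hfg).congr_right fun q => one_mul q).add
    ((hexp.mul (hg.isBigO_one ℝ)).congr_right fun q => mul_one q)).congr' ?_ EventuallyEq.rfl
  exact Eventually.of_forall fun q => by ring

theorem extension_boundary_expansion (γ lam k : ℝ) (hγ : 0 < γ) (hγ' : γ < 1)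
    (hlam : lam ≠ 0) (hk : 0 < k) :
    let φ : ℝ → ℝ := fun q =>
      Real.exp (-|lam| * q) * (2 * |lam| * q) ^ γ *
        (Real.Gamma ((1 + γ + k) / 2) / Real.Gamma γ) *
        kummerV ((1 + γ + k) / 2) (1 + γ) (2 * |lam| * q)
    (fun q : ℝ => φ q -
        (1 - (Real.Gamma (1 - γ) / Real.Gamma (1 + γ)) *
          (Real.Gamma ((1 + γ + k) / 2) / Real.Gamma ((1 - γ + k) / 2)) *
          (2 * |lam| * q) ^ γ))
      =O[nhdsWithin 0 (Set.Ioi 0)] (fun q : ℝ => q) := by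
  intro φ
  have hL : 0 < |lam| := abs_pos.2 hlam
  have hγa : γ < (1 + γ + k) / 2 := by linarith
  have hφ : ∀ q, 0 < q → φ q = exp (-|lam| * q)
      * (shiftedGammaIntegral ((1 + γ + k) / 2) γ (2 * |lam| * q) / Gamma γ) := fun q hq => by
    have hΓ := (Gamma_pos_of_pos (hγ.trans hγa)).ne'
    simp only [φ]
    rw [show ∀ e r G V : ℝ, e * r * G * V = e * G * (r * V) from fun _ _ _ _ => by ring,
      rpow_mul_kummerV (by positivity)]
    field_simp
  rw [show (1 - γ + k) / 2 = (1 + γ + k) / 2 - γ by ring]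
  set a := (1 + γ + k) / 2
  set L := |lam|
  set c := Gamma (1 - γ) / Gamma (1 + γ) * (Gamma a / Gamma (a - γ))
  have hJ : (fun q => shiftedGammaIntegral a γ (2 * L * q) / Gamma γ - (1 - c * (2 * L * q) ^ γ))
      =O[𝓝[>] 0] fun q => q :=
    ((shiftedGammaIntegral_div_Gamma_sub_isBigO hγ hγ' hγa).comp_tendsto
      (tendsto_const_mul_nhdsGT_zero (by positivity))).trans
      ((isBigO_refl _ _).const_mul_left (2 * L))
  have hlim : Tendsto (fun q => 1 - c * (2 * L * q) ^ γ) (𝓝[>] 0)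
      (𝓝 (1 - c * (2 * L * 0) ^ γ)) :=
    ((continuous_const.sub (continuous_const.mul ((continuous_rpow_const hγ.le).comp
      (continuous_const_mul (2 * L))))).tendsto 0).mono_left nhdsWithin_le_nhds
  refine (exp_neg_mul_mul_sub_isBigO (L := L) hJ hlim).congr' ?_ EventuallyEq.rfl
  filter_upwards [self_mem_nhdsWithin] with q (hq : 0 < q)
  rw [hφ q hq]
end
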